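/- Let n ≥ 3 and μ ∈ ℂ. There exist constants N(μ) > 0 and M(μ) > 0, depending only on n and μ, such that for every x = (x₁,…,xₙ) ∈ ℂⁿ with H(x) = μ satisfying the sink condition |(∏_{j≠i} x_j) − xᵢ| ≥ |xᵢ| for every i ∈ {1,…,n}, one has min{|x₁|,…,|xₙ|} ≤ N(μ) and min_{1≤i<j≤n} |∏_{k≠i,j} x_k| ≤ M(μ). -/

import Mathlib

open scoped BigOperators

/-- The Markoff–Hurwitz polynomial `H(x) = x₁² + ⋯ + xₙ² − x₁⋯xₙ`. -/
noncomputable def MH (n : ℕ) (x : Fin n → ℂ) : ℂ := (∑ i, x i ^ 2) - ∏ i, x i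

/-!
Let `s = |x_a| ≥ t = |x_b|` be the two largest moduli and `p` the modulus of the product of the
remaining coordinates. On the level set, `x_a (∏_{j≠a} x_j − x_a) = ∑_{j≠a} x_j² − μ`, so the sink
condition at `a` gives `s² ≤ n t² + |μ|`, while `s t p = |∏ x| = |∑ x_j² − μ| ≤ n s² + |μ|`.
If `t ≤ 1` then `p ≤ 1`; otherwise `s ≤ √(n + |μ|) t`, and dividing by `s t ≥ 1` bounds `p`.
Finally some coordinate other than `x_a, x_b` has modulus at most `max 1 p`.
-/

open Finset

noncomputable def sinkBound (n : ℕ) (μ : ℂ) : ℝ := n * √(n + ‖μ‖) + ‖μ‖ + 1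

lemma one_le_sinkBound (n : ℕ) (μ : ℂ) : 1 ≤ sinkBound n μ := by
  unfold sinkBound
  have : 0 ≤ (n : ℝ) * √(n + ‖μ‖) := by positivity
  linarith [norm_nonneg μ]

lemma exists_le_max_one_prod {ι : Type*} {s : Finset ι} (hs : s.Nonempty) {f : ι → ℝ}
    (hf : ∀ k ∈ s, 0 ≤ f k) : ∃ k ∈ s, f k ≤ max 1 (∏ k ∈ s, f k) := by
  classical
  by_cases hsmall : ∃ k ∈ s, f k ≤ 1
  · obtain ⟨k, hk, hk1⟩ := hsmall
    exact ⟨k, hk, hk1.trans (le_max_left _ _)⟩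
  push Not at hsmall
  obtain ⟨k, hk⟩ := hs
  refine ⟨k, hk, le_max_of_le_right ?_⟩
  rw [← mul_prod_erase s f hk]
  exact le_mul_of_one_le_right (hf k hk)
    (Finset.one_le_prod fun j hj => (hsmall j (mem_of_mem_erase hj)).le)

lemma norm_sum_sq_le {ι 𝕜 : Type*} [NormedDivisionRing 𝕜] (s : Finset ι) (x : ι → 𝕜) {t : ℝ}
    (ht : ∀ j ∈ s, ‖x j‖ ≤ t) : ‖∑ j ∈ s, x j ^ 2‖ ≤ #s * t ^ 2 := by
  calc ‖∑ j ∈ s, x j ^ 2‖ ≤ ∑ j ∈ s, ‖x j‖ ^ 2 := by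
        simp only [← norm_pow]; exact norm_sum_le _ _
    _ ≤ #s * t ^ 2 := by
      simpa only [nsmul_eq_mul] using
        sum_le_card_nsmul s _ _ fun j hj => pow_le_pow_left₀ (norm_nonneg _) (ht j hj) 2

lemma mul_prod_erase_sub_self_eq_sub_MH {n : ℕ} (x : Fin n → ℂ) (i : Fin n) :
    x i * ((∏ j ∈ univ.erase i, x j) - x i) = (∑ j ∈ univ.erase i, x j ^ 2) - MH n x := by
  rw [MH, ← add_sum_erase _ _ (mem_univ i), ← mul_prod_erase _ _ (mem_univ i)]
  ring

lemma norm_prod_le_add_norm_MH {n : ℕ} {x : Fin n → ℂ} {s : ℝ} (hs : ∀ j, ‖x j‖ ≤ s) :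
    ‖∏ j, x j‖ ≤ n * s ^ 2 + ‖MH n x‖ := by
  have hsum := norm_sum_sq_le univ x fun j _ => hs j
  rw [card_univ, Fintype.card_fin] at hsum
  calc ‖∏ j, x j‖ = ‖(∑ j, x j ^ 2) - MH n x‖ := by rw [MH, sub_sub_cancel]
    _ ≤ n * s ^ 2 + ‖MH n x‖ := (norm_sub_le _ _).trans (by gcongr)

lemma norm_sq_le_of_sink {n : ℕ} {x : Fin n → ℂ} {i : Fin n} {t : ℝ}
    (hsink : ‖x i‖ ≤ ‖(∏ j ∈ univ.erase i, x j) - x i‖)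
    (ht : ∀ j ∈ univ.erase i, ‖x j‖ ≤ t) :
    ‖x i‖ ^ 2 ≤ n * t ^ 2 + ‖MH n x‖ := by
  have hcard : (#(univ.erase i) : ℝ) ≤ n := by
    rw [card_erase_of_mem (mem_univ i), card_univ, Fintype.card_fin]
    exact_mod_cast n.sub_le 1
  calc ‖x i‖ ^ 2 ≤ ‖x i‖ * ‖(∏ j ∈ univ.erase i, x j) - x i‖ := by
        rw [sq]; exact mul_le_mul_of_nonneg_left hsink (norm_nonneg _)
    _ = ‖(∑ j ∈ univ.erase i, x j ^ 2) - MH n x‖ := by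
        rw [← norm_mul, mul_prod_erase_sub_self_eq_sub_MH]
    _ ≤ #(univ.erase i) * t ^ 2 + ‖MH n x‖ :=
        (norm_sub_le _ _).trans (by gcongr; exact norm_sum_sq_le _ x ht)
    _ ≤ n * t ^ 2 + ‖MH n x‖ := by gcongr

lemma le_of_sq_le_of_mul_le {a m s t p : ℝ} (ha : 0 ≤ a) (hm : 0 ≤ m)
    (ht : 1 ≤ t) (hts : t ≤ s) (hs : s ^ 2 ≤ a * t ^ 2 + m) (hprod : s * t * p ≤ a * s ^ 2 + m) :
    p ≤ a * √(a + m) + m := by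
  have hst : 1 ≤ s * t := by nlinarith
  have hs_le : s ≤ √(a + m) * t := by
    rw [← pow_le_pow_iff_left₀ (by linarith) (by positivity) two_ne_zero, mul_pow,
      Real.sq_sqrt (by positivity)]
    nlinarith [mul_le_mul_of_nonneg_left (one_le_pow₀ ht : 1 ≤ t ^ 2) hm]
  have : s * t * p ≤ (a * √(a + m) + m) * (s * t) := by
    nlinarith [mul_le_mul_of_nonneg_left hs_le (mul_nonneg ha (by linarith) : 0 ≤ a * s)]
  nlinarith

lemma norm_prod_erase_erase_le_of_sink {n : ℕ} {x : Fin n → ℂ} {a b : Fin n}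
    (ha : ∀ j, ‖x j‖ ≤ ‖x a‖) (hb : ∀ j ∈ univ.erase a, ‖x j‖ ≤ ‖x b‖) (hba : b ∈ univ.erase a)
    (hsink : ‖x a‖ ≤ ‖(∏ j ∈ univ.erase a, x j) - x a‖) :
    ‖∏ k ∈ (univ.erase a).erase b, x k‖ ≤ sinkBound n (MH n x) := by
  rw [norm_prod]
  rcases le_or_gt ‖x b‖ 1 with hb1 | hb1
  · exact (prod_le_one (fun _ _ => norm_nonneg _)
      fun k hk => (hb k (mem_of_mem_erase hk)).trans hb1).trans (one_le_sinkBound _ _)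
  have hprod : ‖x a‖ * ‖x b‖ * ∏ k ∈ (univ.erase a).erase b, ‖x k‖ ≤
      n * ‖x a‖ ^ 2 + ‖MH n x‖ := by
    rw [mul_assoc, ← norm_prod, ← norm_mul, ← norm_mul, mul_prod_erase _ _ hba,
      mul_prod_erase _ _ (mem_univ a)]
    exact norm_prod_le_add_norm_MH ha
  have := le_of_sq_le_of_mul_le (Nat.cast_nonneg n) (norm_nonneg _) hb1.le (ha b) (norm_sq_le_of_sink hsink hb) hprod
  unfold sinkBound
  linarith

/-- **Sink estimate.** There are constants `N(μ), M(μ) > 0`, depending only on `n` and `μ`,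
such that every `x` on the level set `H(x) = μ` which is a sink
(`|(∏_{j≠i} x_j) − xᵢ| ≥ |xᵢ|` for every `i`) satisfies `min |xᵢ| ≤ N(μ)` and
`min_{i<j} |∏_{k≠i,j} x_k| ≤ M(μ)`. -/
theorem sink_estimate (n : ℕ) (hn : 3 ≤ n) (μ : ℂ) :
    ∃ N : ℝ, 0 < N ∧ ∃ M : ℝ, 0 < M ∧
      ∀ x : Fin n → ℂ, MH n x = μ →
        (∀ i : Fin n,
          ‖x i‖ ≤ ‖(∏ j ∈ Finset.univ.erase i, x j) - x i‖) →
        (∃ i : Fin n, ‖x i‖ ≤ N) ∧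
        (∃ i j : Fin n, i < j ∧
          ‖∏ k ∈ (Finset.univ.erase i).erase j, x k‖ ≤ M) := by
  have hK := zero_lt_one.trans_le (one_le_sinkBound n μ)
  refine ⟨sinkBound n μ, hK, sinkBound n μ, hK, fun x hx hsink => ?_⟩
  have : Nonempty (Fin n) := ⟨⟨0, by omega⟩⟩
  obtain ⟨a, -, ha⟩ := exists_max_image univ (‖x ·‖) univ_nonempty
  obtain ⟨b, hba, hb⟩ := exists_max_image (univ.erase a) (‖x ·‖) <| by
    rw [← card_pos, card_erase_of_mem (mem_univ a), card_fin]; omega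
  have hrest : ((univ.erase a).erase b).Nonempty := by
    rw [← card_pos, card_erase_of_mem hba, card_erase_of_mem (mem_univ a), card_fin]; omega
  have hbound := hx ▸ norm_prod_erase_erase_le_of_sink (fun j => ha j (mem_univ j)) hb hba
    (hsink a)
  obtain ⟨k, -, hk⟩ := exists_le_max_one_prod hrest fun k _ => norm_nonneg (x k)
  refine ⟨⟨k, hk.trans (max_le (one_le_sinkBound n μ) (by rwa [← norm_prod]))⟩, ?_⟩
  rcases lt_or_gt_of_ne (ne_of_mem_erase hba) with hlt | hgt
  · exact ⟨b, a, hlt, by rwa [erase_right_comm]⟩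
  · exact ⟨a, b, hgt, hbound⟩
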